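/- arXiv:1407.7495 — 9 statements merged into one kernel-verified Lean document; each statement's English description precedes it below -/
import Mathlib

section
/- Let Y be a regular topological space and X a dense subspace of Y. Let K ⊆ X be compact. If (F_n)_{n∈ω} is a closed net at K in X, then the family of closures (cl_Y(F_n))_{n∈ω} is a closed net at K in Y. -/
open Set

/-- A space is Menger if for every sequence of open covers one can choose finite
subfamilies whose union is a cover. -/
def Menger (X : Type*) [TopologicalSpace X] : Prop :=
  ∀ U : ℕ → Set (Set X),
    (∀ n, (∀ s ∈ U n, IsOpen s) ∧ ⋃₀ U n = Set.univ) →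
    ∃ V : ℕ → Set (Set X),
      (∀ n, V n ⊆ U n ∧ (V n).Finite) ∧ ⋃₀ (⋃ n, V n) = Set.univ

/-- A family of open sets is an almost covering if the complement of its union is compact. -/
def AlmostCover {X : Type*} [TopologicalSpace X] (U : Set (Set X)) : Prop :=
  (∀ s ∈ U, IsOpen s) ∧ IsCompact (⋃₀ U)ᶜ

/-- The selection principle `S_fin(𝓐,𝓐)` for almost coverings. -/
def SfinAA (X : Type*) [TopologicalSpace X] : Prop :=
  ∀ U : ℕ → Set (Set X), (∀ n, AlmostCover (U n)) →
    ∃ V : ℕ → Set (Set X),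
      (∀ n, V n ⊆ U n ∧ (V n).Finite) ∧ IsCompact (⋃₀ (⋃ n, V n))ᶜ

/-- A sequence of sets is a closed net at `K` if each member is closed and contains `K`,
and every open neighborhood of `K` contains some member. -/
def ClosedNetSeqAt {X : Type*} [TopologicalSpace X] (F : ℕ → Set X) (K : Set X) : Prop :=
  (∀ n, IsClosed (F n) ∧ K ⊆ F n) ∧
    ∀ A : Set X, IsOpen A → K ⊆ A → ∃ n, F n ⊆ A

/-- A decreasing closed net at `K`. -/
def DecClosedNetSeqAt {X : Type*} [TopologicalSpace X] (F : ℕ → Set X) (K : Set X) : Prop :=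
  (∀ n, F (n + 1) ⊆ F n) ∧ ClosedNetSeqAt F K

/-- A compact set `Q` has a countable (outer) neighborhood base in `X`. -/
def HasCountableOuterBase {X : Type*} [TopologicalSpace X] (Q : Set X) : Prop :=
  ∃ B : ℕ → Set X, (∀ k, IsOpen (B k) ∧ Q ⊆ B k) ∧
    ∀ A : Set X, IsOpen A → Q ⊆ A → ∃ k, B k ⊆ A

/-- `X` is of countable type: every compact set is contained in a compact set having a
countable neighborhood base in `X`. -/
def CountableType (X : Type*) [TopologicalSpace X] : Prop :=
  ∀ K : Set X, IsCompact K → ∃ Q : Set X, IsCompact Q ∧ K ⊆ Q ∧ HasCountableOuterBase Q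

/-- The remainder `βX \ X` of the Stone–Čech compactification. -/
abbrev StoneCechRemainder (X : Type*) [TopologicalSpace X] : Set (StoneCech X) :=
  (Set.range (stoneCechUnit : X → StoneCech X))ᶜ



theorem stmt1 {Y : Type*} [TopologicalSpace Y] [RegularSpace Y] (X : Set Y) (hX : Dense X)
    (K : Set Y) (hKX : K ⊆ X) (hK : IsCompact K) (F : ℕ → Set Y)
    (hFX : ∀ n, F n ⊆ X)
    (hFclosed : ∀ n, closure (F n) ∩ X = F n)  -- each `F n` is closed in the subspace `X`
    (hFK : ∀ n, K ⊆ F n)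
    (hnet : ∀ B : Set Y, IsOpen B → K ⊆ B → ∃ n, F n ⊆ B ∩ X)  -- net property in `X`
    : ClosedNetSeqAt (fun n => closure (F n)) K := by
  refine ⟨fun n => ⟨isClosed_closure, (hFK n).trans subset_closure⟩, ?_⟩
  intro A hA hKA
  obtain ⟨V, hVo, hKV, hVA⟩ := hK.exists_isOpen_closure_subset (hA.mem_nhdsSet.mpr hKA)
  obtain ⟨n, hn⟩ := hnet V hVo hKV
  exact ⟨n, (closure_mono (hn.trans inter_subset_left)).trans hVA⟩
end

section
/- If a topological space X satisfies the selection principle S_fin(𝓐,𝓐) for almost coverings, then X is a Menger space. -/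
open Set

theorem stmt3 {X : Type*} [TopologicalSpace X] (h : SfinAA X) : Menger X := by
  intro U hU
  obtain ⟨V, hV, hC⟩ := h U (fun n => ⟨(hU n).1, by
    rw [(hU n).2, compl_univ]; exact isCompact_empty⟩)
  -- cover the compact remainder by finitely many elements of U 0
  have hcov : (⋃₀ (⋃ n, V n))ᶜ ⊆ ⋃ s : U 0, (s : Set X) := by
    rw [← sUnion_eq_iUnion, (hU 0).2]; exact subset_univ _
  obtain ⟨t, ht⟩ := hC.elim_finite_subcover (fun s : U 0 => (s : Set X))
    (fun s => (hU 0).1 s s.2) hcov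
  refine ⟨fun n => if n = 0 then V 0 ∪ (fun s : U 0 => (s : Set X)) '' t else V n, ?_, ?_⟩
  · intro n
    by_cases hn : n = 0
    · subst hn; simp only [if_pos rfl]
      constructor
      · exact union_subset (hV 0).1 (by rintro _ ⟨s, _, rfl⟩; exact s.2)
      · exact ((hV 0).2).union (t.finite_toSet.image _)
    · simp only [if_neg hn]; exact hV n
  · apply eq_univ_of_forall
    intro x
    by_cases hx : x ∈ ⋃₀ (⋃ n, V n)
    · obtain ⟨s, hs, hxs⟩ := hx
      obtain ⟨_, ⟨n, rfl⟩, hsn⟩ := hs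
      refine ⟨s, ?_, hxs⟩
      refine mem_iUnion.2 ⟨n, ?_⟩
      by_cases hn : n = 0
      · subst hn; simp [hsn]
      · simp [hn, hsn]
    · have := ht hx
      obtain ⟨s, hst, hxs⟩ := mem_iUnion₂.1 this
      refine ⟨s, ?_, hxs⟩
      refine mem_iUnion.2 ⟨0, ?_⟩
      simp only [if_pos rfl]
      exact Or.inr ⟨s, hst, rfl⟩
end

section
/- The Menger property is inversely preserved by perfect maps: if f : X → Y is a continuous closed surjection with compact fibers and Y is Menger, then X is Menger. -/
open Set

theorem stmt9 {X Y : Type*} [TopologicalSpace X] [TopologicalSpace Y] (f : X → Y)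
    (hf : Continuous f) (hclosed : IsClosedMap f) (hsurj : Function.Surjective f)
    (hfib : ∀ y, IsCompact (f ⁻¹' {y})) (hY : Menger Y) : Menger X := by
  classical
  intro U hU
  set W : ℕ → Set (Set Y) := fun n =>
    {w | IsOpen w ∧ ∃ F : Set (Set X), F ⊆ U n ∧ F.Finite ∧ f ⁻¹' w ⊆ ⋃₀ F} with hWdef
  have hW : ∀ n, (∀ s ∈ W n, IsOpen s) ∧ ⋃₀ W n = Set.univ := by
    intro n
    refine ⟨fun s hs => hs.1, Set.eq_univ_of_forall fun y => ?_⟩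
    have hcov : f ⁻¹' {y} ⊆ ⋃ i ∈ U n, i := by
      rw [← Set.sUnion_eq_biUnion, (hU n).2]; exact Set.subset_univ _
    obtain ⟨t, htsub, htfin, htcov⟩ :=
      (hfib y).elim_finite_subcover_image (fun i hi => (hU n).1 i hi) hcov
    set w : Set Y := (f '' (⋃ i ∈ t, i)ᶜ)ᶜ with hwdef
    have hwopen : IsOpen w := by
      rw [hwdef, isOpen_compl_iff]
      exact hclosed _ (isOpen_biUnion fun i hi => (hU n).1 i (htsub hi)).isClosed_compl
    have hwpre : f ⁻¹' w ⊆ ⋃₀ t := by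
      intro x hx
      rw [Set.sUnion_eq_biUnion]
      by_contra hxt
      exact hx (Set.mem_image_of_mem f hxt)
    refine Set.mem_sUnion.2 ⟨w, ⟨hwopen, t, htsub, htfin, hwpre⟩, ?_⟩
    intro hy
    obtain ⟨x, hx, hfx⟩ := hy
    exact hx (htcov (show x ∈ f ⁻¹' {y} from hfx))
  obtain ⟨G, hGsub, hGcov⟩ := hY W hW
  have hF : ∀ n, ∀ w ∈ G n, ∃ F : Set (Set X), F ⊆ U n ∧ F.Finite ∧ f ⁻¹' w ⊆ ⋃₀ F :=
    fun n w hw => ((hGsub n).1 hw).2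
  choose! F hFsub hFfin hFpre using hF
  refine ⟨fun n => ⋃ w ∈ G n, F n w, fun n => ⟨?_, ?_⟩, ?_⟩
  · exact Set.iUnion₂_subset fun w hw => hFsub n w hw
  · exact (hGsub n).2.biUnion fun w hw => hFfin n w hw
  · apply Set.eq_univ_of_forall
    intro x
    have : f x ∈ ⋃₀ ⋃ n, G n := by rw [hGcov]; trivial
    obtain ⟨w, hw, hfxw⟩ := this
    obtain ⟨n, hn⟩ := Set.mem_iUnion.1 hw
    obtain ⟨s, hs, hxs⟩ := hFpre n w hn hfxw
    exact ⟨s, Set.mem_iUnion.2 ⟨n, Set.mem_iUnion.2 ⟨w, Set.mem_iUnion.2 ⟨hn, hs⟩⟩⟩, hxs⟩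
end

section
/- Let X be a Tychonoff space with Stone–Čech compactification βX. If βX \ X is Menger, then for every sequence (K_n)_{n∈ω} of compact subsets of X and every family (F_p^n)_{p∈ω} where for each n, (F_p^n)_{p∈ω} is a decreasing closed net at K_n in X, there exists f : ω → ω such that K = ⋂_{n∈ω} F_{f(n)}^n is compact and (⋂_{k≤n} F_{f(k)}^k)_{n∈ω} is a closed net at K in X. -/
/-!
Push everything into `βX` via the embedding `e : X → βX`. For each `n`, the complements of the
closures `cl (e '' F n p)` increase with `p` and cover the remainder `βX \ X`, because `K n` is
compact and `F n` is a net at it. The Menger property selects one index `f n` per `n` so that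
these complements still cover the remainder; hence `⋂ n, cl (e '' F n (f n))` lies inside `e '' X`,
where it equals `e '' ⋂ n, F n (f n)`. Being closed in the compact space `βX`, it is compact, and
compactness of `βX` also forces every neighbourhood of it to contain a finite partial intersection.
-/

open Set

open Topology

theorem DecClosedNetSeqAt.antitone {X : Type*} [TopologicalSpace X] {F : ℕ → Set X}
    {K : Set X} (hF : DecClosedNetSeqAt F K) : Antitone F :=
  antitone_nat_of_succ_le hF.1

theorem ClosedNetSeqAt.exists_notMem_closure_image {X Y : Type*} [TopologicalSpace X]
    [TopologicalSpace Y] [T2Space Y] {e : X → Y} (he : Continuous e) {F : ℕ → Set X}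
    {K : Set X} (hF : ClosedNetSeqAt F K) (hK : IsCompact K) {y : Y} (hy : y ∉ e '' K) :
    ∃ p, y ∉ closure (e '' F p) := by
  obtain ⟨U, W, hUo, hWo, hKU, hyW, hUW⟩ := SeparatedNhds.of_isCompact_isCompact
    (hK.image he) isCompact_singleton (disjoint_singleton_right.2 hy)
  obtain ⟨p, hp⟩ := hF.2 (e ⁻¹' U) (hUo.preimage he) (image_subset_iff.1 hKU)
  refine ⟨p, fun hyp => ?_⟩
  have hyU : y ∈ closure U := closure_mono (image_subset_iff.2 hp) hyp
  exact disjoint_left.1 (hUW.closure_left hWo) hyU (hyW rfl)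

theorem Menger.exists_iUnion_eq_univ {Y : Type*} [TopologicalSpace Y] (hY : Menger Y)
    {U : ℕ → ℕ → Set Y} (hUo : ∀ n p, IsOpen (U n p)) (hUm : ∀ n, Monotone (U n))
    (hUc : ∀ n, ⋃ p, U n p = univ) : ∃ f : ℕ → ℕ, ⋃ n, U n (f n) = univ := by
  obtain ⟨V, hVU, hV⟩ := hY (fun n => range (U n))
    (fun n => ⟨forall_mem_range.2 (hUo n), (sUnion_range (U n)).trans (hUc n)⟩)
  have hbound : ∀ n, ∃ m, ∀ s ∈ V n, s ⊆ U n m := fun n => by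
    have := (hVU n).2.to_subtype
    choose idx hidx using fun s : V n => (hVU n).1 s.2
    obtain ⟨m, hm⟩ := (hUm n).directed_le.finite_le idx
    exact ⟨m, fun s hs => (hidx ⟨s, hs⟩).ge.trans (hm ⟨s, hs⟩)⟩
  choose f hf using hbound
  refine ⟨f, eq_univ_of_forall fun y => ?_⟩
  obtain ⟨s, hs, hys⟩ := mem_sUnion.1 (hV ▸ mem_univ y)
  obtain ⟨n, hsn⟩ := mem_iUnion.1 hs
  exact mem_iUnion.2 ⟨n, hf n s hsn hys⟩

theorem exists_biInter_le_subset_of_iInter_subset {Y : Type*} [TopologicalSpace Y]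
    [CompactSpace Y] {Q : ℕ → Set Y} (hQ : ∀ n, IsClosed (Q n)) {U : Set Y} (hU : IsOpen U)
    (hQU : ⋂ n, Q n ⊆ U) : ∃ n, ⋂ k ≤ n, Q k ⊆ U := by
  have hclosed : ∀ n, IsClosed (⋂ k ≤ n, Q k) := fun n => isClosed_biInter fun k _ => hQ k
  have hanti : Antitone fun n => ⋂ k ≤ n, Q k := fun m n hmn =>
    biInter_subset_biInter_left fun k hk => le_trans hk hmn
  refine exists_subset_nhds_of_isCompact' hanti.directed_ge (fun n => (hclosed n).isCompact)
    hclosed fun x hx => hU.mem_nhds (hQU (mem_iInter.2 fun n => ?_))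
  exact mem_iInter₂.1 (mem_iInter.1 hx n) n le_rfl

section Inducing

variable {X Y ι : Type*} [TopologicalSpace X] [TopologicalSpace Y] {e : X → Y}
  {F : ι → Set X}

theorem Topology.IsInducing.image_iInter_eq_iInter_closure_image (he : IsInducing e)
    (hF : ∀ i, IsClosed (F i)) (hsub : ⋂ i, closure (e '' F i) ⊆ range e) :
    e '' ⋂ i, F i = ⋂ i, closure (e '' F i) := by
  refine (image_iInter_subset F e).trans (iInter_mono fun i => subset_closure) |>.antisymm ?_
  intro z hz
  obtain ⟨x, rfl⟩ := hsub hz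
  refine mem_image_of_mem e (mem_iInter.2 fun i => ?_)
  rw [← (hF i).closure_eq, he.closure_eq_preimage_closure_image]
  exact mem_iInter.1 hz i

variable [CompactSpace Y]

theorem Topology.IsInducing.isCompact_iInter (he : IsInducing e) (hF : ∀ i, IsClosed (F i))
    (hsub : ⋂ i, closure (e '' F i) ⊆ range e) : IsCompact (⋂ i, F i) := by
  rw [he.isCompact_iff, he.image_iInter_eq_iInter_closure_image hF hsub]
  exact (isClosed_iInter fun i => isClosed_closure).isCompact

theorem Topology.IsInducing.closedNetSeqAt_biInter_le {F : ℕ → Set X} (he : IsInducing e)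
    (hF : ∀ n, IsClosed (F n)) (hsub : ⋂ n, closure (e '' F n) ⊆ range e) :
    ClosedNetSeqAt (fun n => ⋂ k ≤ n, F k) (⋂ n, F n) := by
  refine ⟨fun n => ⟨isClosed_biInter fun k _ => hF k,
    subset_iInter₂ fun k _ => iInter_subset F k⟩, fun A hA hKA => ?_⟩
  obtain ⟨A', hA'o, rfl⟩ := he.isOpen_iff.1 hA
  have hA' : ⋂ n, closure (e '' F n) ⊆ A' := by
    rw [← he.image_iInter_eq_iInter_closure_image hF hsub]
    exact image_subset_iff.2 hKA
  obtain ⟨n, hn⟩ := exists_biInter_le_subset_of_iInter_subset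
    (fun n => isClosed_closure) hA'o hA'
  refine ⟨n, fun x hx => hn (mem_iInter₂.2 fun k hk => subset_closure ?_)⟩
  exact mem_image_of_mem e (mem_iInter₂.1 hx k hk)

end Inducing

theorem stmt10 {X : Type*} [TopologicalSpace X] [T35Space X]
    (h : Menger ↥(StoneCechRemainder X))
    (K : ℕ → Set X) (hK : ∀ n, IsCompact (K n))
    (F : ℕ → ℕ → Set X) (hF : ∀ n, DecClosedNetSeqAt (F n) (K n)) :
    ∃ f : ℕ → ℕ, IsCompact (⋂ n, F n (f n)) ∧
      ClosedNetSeqAt (fun n => ⋂ (k) (_ : k ≤ n), F k (f k)) (⋂ n, F n (f n)) := by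
  set e : X → StoneCech X := stoneCechUnit
  have he : IsInducing e := isInducing_stoneCechUnit
  have hFcl : ∀ n p, IsClosed (F n p) := fun n p => ((hF n).2.1 p).1
  obtain ⟨f, hf⟩ := h.exists_iUnion_eq_univ
    (U := fun n p => Subtype.val ⁻¹' (closure (e '' F n p))ᶜ)
    (fun n p => isClosed_closure.isOpen_compl.preimage continuous_subtype_val)
    (fun n p q hpq => preimage_mono <| compl_subset_compl.2 <|
      closure_mono <| image_mono <| (hF n).antitone hpq)
    (fun n => eq_univ_of_forall fun y => mem_iUnion.2 <|
      (hF n).2.exists_notMem_closure_image continuous_stoneCechUnit (hK n)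
        fun hy => y.2 (image_subset_range e (K n) hy))
  have hsub : ⋂ n, closure (e '' F n (f n)) ⊆ range e := fun z hz => by
    by_contra hz'
    obtain ⟨n, hn⟩ := mem_iUnion.1 (hf ▸ mem_univ (⟨z, hz'⟩ : StoneCechRemainder X))
    exact hn (mem_iInter.1 hz n)
  exact ⟨f, he.isCompact_iInter (fun n => hFcl n (f n)) hsub,
    he.closedNetSeqAt_biInter_le (fun n => hFcl n (f n)) hsub⟩
end

section
/- Let X be a Tychonoff space that is of countable type and satisfies: for every sequence (K_n)_{n∈ω} of compact subsets of X and every choice of decreasing closed nets (F_p^n)_{p∈ω} at K_n, there is f : ω → ω such that K = ⋂_{n∈ω} F_{f(n)}^n is compact and (⋂_{k≤n} F_{f(k)}^k)_{n∈ω} is a closed net at K. Then βX \ X is Menger. -/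
open Set Topology unitInterval

lemma myIsEmbedding_stoneCechUnit {X : Type*} [TopologicalSpace X] [T35Space X] :
    IsEmbedding (stoneCechUnit : X → StoneCech X) := by
  refine ⟨isInducing_iff_nhds.2 fun x => le_antisymm ?_ ?_, injective_stoneCechUnit_of_t35Space⟩
  · exact continuous_stoneCechUnit.continuousAt.le_comap
  · intro U hU
    obtain ⟨U', hU'U, hU'open, hxU'⟩ := mem_nhds_iff.mp hU
    obtain ⟨g, gc, gx, gK⟩ := CompletelyRegularSpace.completely_regular x U'ᶜ
      hU'open.isClosed_compl (by simpa)
    refine Filter.mem_comap.2 ⟨stoneCechExtend gc ⁻¹' ({1}ᶜ), ?_, ?_⟩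
    · refine ((isOpen_compl_singleton).preimage (continuous_stoneCechExtend gc)).mem_nhds ?_
      simp only [mem_preimage, mem_compl_iff, mem_singleton_iff]
      rw [show stoneCechExtend gc (stoneCechUnit x) = g x from congrFun (stoneCechExtend_extends gc) x, gx]
      exact zero_ne_one
    · intro z hz
      simp only [mem_preimage, mem_compl_iff, mem_singleton_iff] at hz
      rw [show stoneCechExtend gc (stoneCechUnit z) = g z from congrFun (stoneCechExtend_extends gc) z] at hz
      by_contra hzU
      exact hz (gK (fun h : z ∈ U' => hzU (hU'U h)))

set_option maxHeartbeats 1000000 in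
theorem stmt11 {X : Type*} [TopologicalSpace X] [T35Space X]
    (hct : CountableType X)
    (hsel : ∀ K : ℕ → Set X, (∀ n, IsCompact (K n)) →
      ∀ F : ℕ → ℕ → Set X, (∀ n, DecClosedNetSeqAt (F n) (K n)) →
        ∃ f : ℕ → ℕ, IsCompact (⋂ n, F n (f n)) ∧
          ClosedNetSeqAt (fun n => ⋂ (k) (_ : k ≤ n), F k (f k)) (⋂ n, F n (f n))) :
    Menger ↥(StoneCechRemainder X) := by
  classical
  intro U hU
  set e : X → StoneCech X := stoneCechUnit with he
  have hemb : IsEmbedding e := myIsEmbedding_stoneCechUnit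
  -- extend members of the covers to open sets of βX
  have hext : ∀ n, ∀ s : Set ↥(StoneCechRemainder X), s ∈ U n →
      ∃ t : Set (StoneCech X), IsOpen t ∧ Subtype.val ⁻¹' t = s := fun n s hs =>
    IsInducing.subtypeVal.isOpen_iff.mp ((hU n).1 s hs)
  choose! W hWopen hWeq using hext
  set K : ℕ → Set (StoneCech X) := fun n => (⋃ s ∈ U n, W n s)ᶜ with hKdef
  have hKclosed : ∀ n, IsClosed (K n) := fun n =>
    (isOpen_biUnion fun s hs => hWopen n s hs).isClosed_compl
  have hKrange : ∀ n, K n ⊆ range e := by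
    intro n z hz
    by_contra hzr
    have hzY : z ∈ StoneCechRemainder X := hzr
    have hmem : (⟨z, hzY⟩ : ↥(StoneCechRemainder X)) ∈ ⋃₀ U n := by
      rw [(hU n).2]; trivial
    obtain ⟨s, hsU, hzs⟩ := hmem
    apply hz
    refine mem_biUnion hsU ?_
    rw [← hWeq n s hsU] at hzs
    exact hzs
  have hKXcompact : ∀ n, IsCompact (e ⁻¹' K n) := fun n =>
    hemb.isInducing.isCompact_preimage' (hKclosed n).isCompact (hKrange n)
  choose Q hQcomp hKQ hQbase using fun n => hct _ (hKXcompact n)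
  have hQbase' : ∀ n, ∃ B : ℕ → Set X, (∀ k, IsOpen (B k) ∧ Q n ⊆ B k) ∧
      ∀ A : Set X, IsOpen A → Q n ⊆ A → ∃ k, B k ⊆ A := hQbase
  choose B hB1 hB2 using hQbase'
  set B' : ℕ → ℕ → Set X := fun n p => ⋂ k ≤ p, B n k with hB'def
  have hB'open : ∀ n p, IsOpen (B' n p) :=
    fun n p => (Set.finite_le_nat p).isOpen_biInter fun k _ => (hB1 n k).1
  have hQB' : ∀ n p, Q n ⊆ B' n p := fun n p => subset_iInter₂ fun k _ => (hB1 n k).2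
  set F : ℕ → ℕ → Set X := fun n p => closure (B' n p) with hFdef
  have hFnet : ∀ n, DecClosedNetSeqAt (F n) (Q n) := by
    intro n
    refine ⟨fun p => closure_mono fun x hx => ?_,
      ⟨fun p => ⟨isClosed_closure, (hQB' n p).trans subset_closure⟩, ?_⟩⟩
    · simp only [hB'def, mem_iInter] at hx ⊢
      exact fun k hk => hx k (hk.trans (Nat.le_succ p))
    · intro A hA hQA
      obtain ⟨V, hVopen, hQV, hVA⟩ :=
        (hQcomp n).exists_isOpen_closure_subset (hA.mem_nhdsSet.mpr hQA)
      obtain ⟨k, hk⟩ := hB2 n V hVopen hQV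
      have hBB : B' n k ⊆ B n k := fun x hx => by
        simp only [hB'def, mem_iInter] at hx; exact hx k le_rfl
      exact ⟨k, (closure_mono (hBB.trans hk)).trans hVA⟩
  obtain ⟨f, hKinf, hGnet⟩ := hsel Q hQcomp F hFnet
  set H : ℕ → Set (StoneCech X) := fun k => closure (e '' (F k (f k))ᶜ) with hHdef
  have hHcomp : ∀ k, IsCompact (H k) := fun k => isClosed_closure.isCompact
  have hHsub : ∀ k, H k ⊆ ⋃ s ∈ U k, W k s := by
    intro k
    obtain ⟨V, hVopen, hVeq⟩ := hemb.isInducing.isOpen_iff.mp (hB'open k (f k))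
    have hdisj : Disjoint (e '' (F k (f k))ᶜ) V := by
      rw [Set.disjoint_left]
      rintro z ⟨x, hx, rfl⟩ hzV
      exact hx (subset_closure (show x ∈ B' k (f k) from hVeq ▸ hzV))
    have hclos : Disjoint (H k) V := hdisj.closure_left hVopen
    intro z hz
    have hzK : z ∉ K k := by
      intro hzK
      have hzV : z ∈ V := by
        obtain ⟨x, rfl⟩ := hKrange k hzK
        have hxQ : x ∈ Q k := hKQ k hzK
        have hxB : x ∈ B' k (f k) := hQB' k (f k) hxQ
        rw [← hVeq] at hxB; exact hxB
      exact hclos.le_bot ⟨hz, hzV⟩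
    simpa [hKdef, not_not] using hzK
  have hHsub' : ∀ k, H k ⊆ ⋃ s : ↥(U k), W k ↑s := by
    intro k z hz
    obtain ⟨s, hs, hzs⟩ := mem_iUnion₂.mp (hHsub k hz)
    exact mem_iUnion.2 ⟨⟨s, hs⟩, hzs⟩
  choose T hT using fun k => (hHcomp k).elim_finite_subcover
    (fun s : ↥(U k) => W k ↑s) (fun s => hWopen k ↑s s.2) (hHsub' k)
  refine ⟨fun n => Subtype.val '' (↑(T n) : Set ↥(U n)), fun n =>
    ⟨by rintro s ⟨i, _, rfl⟩; exact i.2, (T n).finite_toSet.image _⟩, ?_⟩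
  rw [eq_univ_iff_forall]
  intro y
  have hyR : (y : StoneCech X) ∉ range e := y.2
  -- Claim: y lies in some H k
  have hyH : ∃ k, (y : StoneCech X) ∈ H k := by
    have hA : ∃ n, (y : StoneCech X) ∉ closure (e '' (⋂ k ≤ n, F k (f k))) := by
      by_contra hc
      push_neg at hc
      have himg : IsCompact (e '' ⋂ n, F n (f n)) := hKinf.image continuous_stoneCechUnit
      have hynot : (y : StoneCech X) ∉ e '' ⋂ n, F n (f n) := by
        rintro ⟨x, -, hx⟩; exact hyR ⟨x, hx⟩
      have hmem : ({(y : StoneCech X)}ᶜ : Set (StoneCech X)) ∈ 𝓝ˢ (e '' ⋂ n, F n (f n)) := by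
        refine isOpen_compl_singleton.mem_nhdsSet.mpr ?_
        intro z hz
        simp only [mem_compl_iff, mem_singleton_iff]
        rintro rfl; exact hynot hz
      obtain ⟨V, hVopen, hKV, hVsub⟩ := himg.exists_isOpen_closure_subset hmem
      have hKA : (⋂ n, F n (f n)) ⊆ e ⁻¹' V := fun x hx => hKV (mem_image_of_mem e hx)
      obtain ⟨n, hGn⟩ := hGnet.2 (e ⁻¹' V) (hVopen.preimage continuous_stoneCechUnit) hKA
      have : (y : StoneCech X) ∈ closure V :=
        closure_mono (image_subset_iff.mpr hGn) (hc n)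
      exact hVsub this rfl
    obtain ⟨n, hn⟩ := hA
    have hyclos : (y : StoneCech X) ∈ closure (e '' (⋂ k ≤ n, F k (f k))ᶜ) := by
      have hdense : (y : StoneCech X) ∈ closure (range e) := denseRange_stoneCechUnit _
      rw [← image_univ, ← union_compl_self (⋂ k ≤ n, F k (f k)), image_union,
        closure_union] at hdense
      exact hdense.resolve_left hn
    have hsubH : closure (e '' (⋂ k ≤ n, F k (f k))ᶜ) ⊆ ⋃ k ≤ n, H k := by
      refine closure_minimal ?_ ((Set.finite_le_nat n).isClosed_biUnion
        fun k _ => isClosed_closure)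
      rintro z ⟨x, hx, rfl⟩
      simp only [mem_compl_iff, mem_iInter, not_forall] at hx
      obtain ⟨k, hk, hxk⟩ := hx
      exact mem_biUnion hk (subset_closure (mem_image_of_mem e hxk))
    obtain ⟨k, -, hk⟩ := mem_iUnion₂.mp (hsubH hyclos)
    exact ⟨k, hk⟩
  obtain ⟨k, hyk⟩ := hyH
  obtain ⟨i, hiT, hyi⟩ := mem_iUnion₂.mp (hT k hyk)
  refine mem_sUnion.2 ⟨(i : Set ↥(StoneCechRemainder X)), ?_, ?_⟩
  · exact mem_iUnion.2 ⟨k, mem_image_of_mem _ hiT⟩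
  · rw [← hWeq k ↑i i.2]
    exact hyi
end

section
/- Let X be a Tychonoff space. If βX \ X is Menger, then for every sequence (K_n)_{n∈ω} of compact subsets of X there exists a sequence (Q_n)_{n∈ω} of compact subsets of X such that K_n ⊆ Q_n for each n and each Q_n has a countable neighborhood base in X. -/
open Set

open Topology Filter unitInterval in
lemma isInducing_stoneCechUnit' {X : Type*} [TopologicalSpace X] [T35Space X] :
    Topology.IsInducing (stoneCechUnit : X → StoneCech X) := by
  rw [Topology.isInducing_iff_nhds]
  intro x
  refine le_antisymm (tendsto_iff_comap.mp (continuous_stoneCechUnit.tendsto x)) ?_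
  intro A hA
  obtain ⟨U, hUA, hU, hxU⟩ := mem_nhds_iff.mp hA
  obtain ⟨f, hf, hfx, hfU⟩ :=
    CompletelyRegularSpace.completely_regular x Uᶜ hU.isClosed_compl (by simpa)
  refine mem_comap.mpr ⟨(stoneCechExtend hf) ⁻¹' {(1 : I)}ᶜ, ?_, ?_⟩
  · refine IsOpen.mem_nhds
      (isClosed_singleton.isOpen_compl.preimage (continuous_stoneCechExtend hf)) ?_
    have h1 : stoneCechExtend hf (stoneCechUnit x) = f x :=
      congrFun (stoneCechExtend_extends hf) x
    simp only [mem_preimage, mem_compl_iff, mem_singleton_iff, h1, hfx]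
    exact zero_ne_one
  · intro y hy
    by_contra hyU
    have hyU' : y ∉ U := fun hc => hyU (hUA hc)
    have h1 : stoneCechExtend hf (stoneCechUnit y) = f y :=
      congrFun (stoneCechExtend_extends hf) y
    have : f y = 1 := hfU hyU'
    exact hy (by simp [mem_preimage, h1, this])

lemma isEmbedding_stoneCechUnit' {X : Type*} [TopologicalSpace X] [T35Space X] :
    Topology.IsEmbedding (stoneCechUnit : X → StoneCech X) :=
  ⟨isInducing_stoneCechUnit', injective_stoneCechUnit_of_t35Space⟩

lemma key_countableType {X : Type*} [TopologicalSpace X] [T35Space X]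
    (h : Menger ↥(StoneCechRemainder X)) (K : Set X) (hK : IsCompact K) :
    ∃ Q : Set X, IsCompact Q ∧ K ⊆ Q ∧ HasCountableOuterBase Q := by
  classical
  set e : X → StoneCech X := stoneCechUnit with he
  have hemb : Topology.IsEmbedding e := isEmbedding_stoneCechUnit'
  set eK : Set (StoneCech X) := e '' K with heK
  have heKcomp : IsCompact eK := hK.image continuous_stoneCechUnit
  have heKclosed : IsClosed eK := heKcomp.isClosed
  -- separating opens for points of the remainder
  have hsel : ∀ y : ↥(StoneCechRemainder X), ∃ O : Set (StoneCech X),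
      IsOpen O ∧ (y : StoneCech X) ∈ O ∧ closure O ∩ eK = ∅ := by
    intro y
    have hy : (y : StoneCech X) ∉ eK := by
      intro hc
      exact y.2 (by rcases hc with ⟨x, -, hx⟩; exact ⟨x, hx⟩)
    have hd : Disjoint {(y : StoneCech X)} eK := by
      simp [Set.disjoint_singleton_left, hy]
    obtain ⟨O, V, hO, hV, hyO, hKV, hOV⟩ :=
      NormalSpace.normal {(y : StoneCech X)} eK isClosed_singleton heKclosed hd
    refine ⟨O, hO, hyO rfl, ?_⟩
    have h1 : closure O ⊆ Vᶜ :=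
      closure_minimal (fun z hz hzV => hOV.le_bot ⟨hz, hzV⟩) hV.isClosed_compl
    ext z
    simp only [mem_inter_iff, mem_empty_iff_false, iff_false, not_and]
    exact fun hz hzK => h1 hz (hKV hzK)
  choose O hOopen hOmem hOdisj using hsel
  -- apply Menger to the constant sequence of covers
  set 𝒰 : Set (Set ↥(StoneCechRemainder X)) :=
    {S | ∃ y, S = Subtype.val ⁻¹' (O y)} with h𝒰
  obtain ⟨V, hV1, hV2⟩ := h (fun _ => 𝒰) (by
    intro n
    constructor
    · rintro s ⟨y, rfl⟩
      exact (hOopen y).preimage continuous_subtype_val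
    · ext y
      simp only [mem_sUnion, mem_univ, iff_true]
      exact ⟨Subtype.val ⁻¹' (O y), ⟨y, rfl⟩, hOmem y⟩)
  set T : Set (Set ↥(StoneCechRemainder X)) := insert ∅ (⋃ n, V n) with hT
  have hTc : T.Countable :=
    (Set.countable_iUnion fun n => (hV1 n).2.countable).insert _
  have hTwit : ∀ s ∈ T, ∃ W : Set (StoneCech X),
      IsOpen W ∧ closure W ∩ eK = ∅ ∧ s ⊆ Subtype.val ⁻¹' W := by
    rintro s (rfl | hs)
    · exact ⟨∅, isOpen_empty, by simp, by simp⟩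
    · obtain ⟨n, hsVn⟩ := mem_iUnion.mp hs
      obtain ⟨y, rfl⟩ := (hV1 n).1 hsVn
      exact ⟨O y, hOopen y, hOdisj y, subset_rfl⟩
  obtain ⟨g, hg⟩ := hTc.exists_eq_range ⟨∅, mem_insert _ _⟩
  have hgT : ∀ n, g n ∈ T := by intro n; rw [hg]; exact ⟨n, rfl⟩
  choose W hWopen hWdisj hWsub using fun n => hTwit (g n) (hgT n)
  -- coverage of the remainder by the W n
  have hcover : ∀ z : StoneCech X, z ∉ range e → ∃ n, z ∈ W n := by
    intro z hz
    have : (⟨z, hz⟩ : ↥(StoneCechRemainder X)) ∈ ⋃₀ (⋃ n, V n) := hV2 ▸ mem_univ _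
    obtain ⟨s, hs, hzs⟩ := this
    have hsT : s ∈ T := mem_insert_of_mem _ hs
    obtain ⟨n, hn⟩ := (hg ▸ hsT : s ∈ range g)
    exact ⟨n, hWsub n (hn ▸ hzs)⟩
  -- Urysohn functions
  have hfex : ∀ n, ∃ f : C(StoneCech X, ℝ),
      EqOn f 0 eK ∧ EqOn f 1 (closure (W n)) ∧ ∀ x, f x ∈ Icc (0:ℝ) 1 := by
    intro n
    refine exists_continuous_zero_one_of_isClosed heKclosed isClosed_closure ?_
    rw [Set.disjoint_iff_inter_eq_empty, Set.inter_comm]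
    exact hWdisj n
  choose f hf0 hf1 hficc using hfex
  set P : Set (StoneCech X) := ⋂ n, (f n) ⁻¹' {0} with hP
  have hPclosed : IsClosed P :=
    isClosed_iInter fun n => isClosed_singleton.preimage (f n).continuous
  have hPcompact : IsCompact P := hPclosed.isCompact
  have heKP : eK ⊆ P := fun z hz => mem_iInter.mpr fun n => by
    simpa using hf0 n hz
  have hPsub : P ⊆ range e := by
    intro z hz
    by_contra hze
    obtain ⟨n, hn⟩ := hcover z hze
    have h1 : f n z = 1 := hf1 n (subset_closure hn)
    have h0 : f n z = 0 := by simpa using mem_iInter.mp hz n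
    norm_num [h0] at h1
  refine ⟨e ⁻¹' P, ?_, ?_, ?_⟩
  · rw [hemb.isCompact_iff, Set.image_preimage_eq_of_subset hPsub]
    exact hPcompact
  · exact fun x hx => heKP ⟨x, hx, rfl⟩
  · -- countable outer base
    refine ⟨fun k => e ⁻¹' (⋂ n ∈ Finset.range (k+1), (f n) ⁻¹' (Iio ((k+1:ℝ)⁻¹))), ?_, ?_⟩
    · intro k
      constructor
      · exact (isOpen_biInter_finset fun n _ =>
          isOpen_Iio.preimage (f n).continuous).preimage continuous_stoneCechUnit
      · intro x hx
        simp only [mem_preimage, mem_iInter]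
        intro n _
        have h0 : f n (e x) = 0 := by simpa using mem_iInter.mp hx n
        simp only [mem_Iio, h0]
        positivity
    · intro A hA hQA
      obtain ⟨A', hA'open, hA'pre⟩ := hemb.isInducing.isOpen_iff.mp hA
      have hPA' : P ⊆ A' := by
        intro z hz
        obtain ⟨x, rfl⟩ := hPsub hz
        have hxA : x ∈ A := hQA hz
        rw [← hA'pre] at hxA
        exact hxA
      set C : ℕ → Set (StoneCech X) :=
        fun k => (⋂ n ∈ Finset.range (k+1), (f n) ⁻¹' (Iic ((k+1:ℝ)⁻¹))) ∩ A'ᶜ with hC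
      have hCclosed : ∀ k, IsClosed (C k) := fun k =>
        ((isClosed_biInter fun n _ => isClosed_Iic.preimage (f n).continuous).inter
          hA'open.isClosed_compl)
      have hCdec : ∀ k, C (k+1) ⊆ C k := by
        intro k z hz
        refine ⟨?_, hz.2⟩
        have h1 := hz.1
        simp only [mem_iInter, mem_preimage, mem_Iic, Finset.mem_range] at h1 ⊢
        intro n hn
        have := h1 n (by omega)
        refine this.trans ?_
        rw [inv_le_inv₀ (by positivity) (by positivity)]
        push_cast; linarith
      have hCempty : (⋂ k, C k) = ∅ := by
        by_contra hne
        obtain ⟨z, hz⟩ := nonempty_iff_ne_empty.mpr hne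
        have hzA : z ∈ A'ᶜ := (mem_iInter.mp hz 0).2
        have hzP : z ∈ P := by
          refine mem_iInter.mpr fun n => ?_
          have hle : ∀ k, n ≤ k → f n z ≤ (k+1:ℝ)⁻¹ := by
            intro k hk
            have := (mem_iInter.mp hz k).1
            simp only [mem_iInter, mem_preimage, mem_Iic, Finset.mem_range] at this
            exact this n (by omega)
          have h0le : (0:ℝ) ≤ f n z := (hficc n z).1
          have hfz : f n z ≤ 0 := by
            by_contra hpos
            push_neg at hpos
            obtain ⟨k, hk⟩ := exists_nat_gt (f n z)⁻¹
            have h1 := hle (n + k) (Nat.le_add_right _ _)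
            have h2 : (f n z)⁻¹ < ((n + k : ℕ) : ℝ) + 1 := by
              push_cast
              have hn0 : (0:ℝ) ≤ (n:ℝ) := Nat.cast_nonneg n
              linarith
            have h3 : (((n + k : ℕ) : ℝ) + 1)⁻¹ < f n z :=
              (inv_lt_comm₀ hpos (by positivity)).mp h2
            linarith
          simp [le_antisymm hfz h0le]
        exact hzA (hPA' hzP)
      have hex : ∃ k, C k = ∅ := by
        by_contra hall
        push_neg at hall
        have := IsCompact.nonempty_iInter_of_sequence_nonempty_isCompact_isClosed C
          hCdec hall ((hCclosed 0).isCompact) hCclosed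
        rw [hCempty] at this
        exact this.ne_empty rfl
      obtain ⟨k, hk⟩ := hex
      refine ⟨k, ?_⟩
      intro x hx
      rw [← hA'pre]
      simp only [mem_preimage] at hx ⊢
      by_contra hxA
      have : e x ∈ C k := by
        refine ⟨?_, hxA⟩
        simp only [mem_iInter, mem_preimage, mem_Iic] at hx ⊢
        intro n hn
        exact le_of_lt (hx n hn)
      rw [hk] at this
      exact this

theorem stmt12 {X : Type*} [TopologicalSpace X] [T35Space X]
    (h : Menger ↥(StoneCechRemainder X)) (K : ℕ → Set X) (hK : ∀ n, IsCompact (K n)) :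
    ∃ Q : ℕ → Set X, ∀ n, IsCompact (Q n) ∧ K n ⊆ Q n ∧ HasCountableOuterBase (Q n) := by
  choose Q hQ1 hQ2 hQ3 using fun n => key_countableType h (K n) (hK n)
  exact ⟨Q, fun n => ⟨hQ1 n, hQ2 n, hQ3 n⟩⟩
end

section
/- A Tychonoff space X is Lindelöf at infinity (i.e., βX \ X is Lindelöf) if and only if X is of countable type. -/
open Set

/-!
Let `e : X → Y` be a compactification. If `X` is of countable type and `U ⊇ Y \ X` is open,
then `Y \ U` is a compact subset of `X`, hence contained in a compact `Q` with a countable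
neighbourhood base `Bₙ`; the compact closures in `Y` of the sets `X \ Bₙ` avoid `Y \ U` and,
by regularity of `Y`, cover `Y \ X`. So every open neighbourhood of `Y \ X` contains a
σ-compact set containing `Y \ X`, and `Y \ X` is Lindelöf.

Conversely, if `Y \ X` is Lindelöf and `K ⊆ X` is compact, regularity yields a `G_δ` set
`⋂ Wₙ` with `K ⊆ ⋂ Wₙ ⊆ X`. Normality of `Y` gives open sets `Dₙ ⊇ K` with
`closure Dₙ₊₁ ⊆ Dₙ ∩ Wₙ`, and by compactness of `Y` the sets `Dₙ` form a neighbourhood base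
of `⋂ closure Dₙ`, a compact set between `K` and `X`.
-/

open Set Topology

theorem isLindelof_of_forall_isOpen_exists_isLindelof {X : Type*} [TopologicalSpace X]
    {s : Set X} (h : ∀ U, IsOpen U → s ⊆ U → ∃ t, IsLindelof t ∧ s ⊆ t ∧ t ⊆ U) :
    IsLindelof s := by
  refine isLindelof_of_countable_subcover fun U hUo hsU => ?_
  obtain ⟨t, ht, hst, htU⟩ := h (⋃ i, U i) (isOpen_iUnion hUo) hsU
  obtain ⟨r, hr, htr⟩ := ht.elim_countable_subcover U hUo htU
  exact ⟨r, hr, hst.trans htr⟩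

theorem DenseRange.closure_image_union_closure_image_compl {X Y : Type*} [TopologicalSpace Y]
    {f : X → Y} (hf : DenseRange f) (s : Set X) :
    closure (f '' s) ∪ closure (f '' sᶜ) = univ := by
  rw [← closure_union, ← image_union, union_compl_self, image_univ, hf.closure_range]

section CountableType

variable {X Y : Type*} [TopologicalSpace X] [TopologicalSpace Y]

theorem exists_notMem_closure_image_of_outerBase [RegularSpace Y] {f : X → Y}
    (hf : Continuous f) {Q : Set X} {B : ℕ → Set X}
    (hB : ∀ A, IsOpen A → Q ⊆ A → ∃ k, B k ⊆ A) {y : Y} (hy : y ∉ closure (f '' Q)) :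
    ∃ k, y ∉ closure (f '' B k) := by
  obtain ⟨N, hNy, hNc, hNQ⟩ :=
    exists_mem_nhds_isClosed_subset (isClosed_closure.isOpen_compl.mem_nhds hy)
  have hQN : Q ⊆ f ⁻¹' Nᶜ := fun x hx hxN => hNQ hxN (subset_closure (mem_image_of_mem f hx))
  obtain ⟨k, hk⟩ := hB _ (hNc.isOpen_compl.preimage hf) hQN
  refine ⟨k, fun hyk => ?_⟩
  have hyN : y ∈ closure Nᶜ :=
    closure_mono ((image_mono hk).trans (image_preimage_subset f _)) hyk
  rw [closure_compl] at hyN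
  exact hyN (mem_interior_iff_mem_nhds.2 hNy)

theorem isLindelof_compl_range_of_countableType [CompactSpace Y] [T2Space Y] {e : X → Y}
    (he : IsDenseInducing e) (hX : CountableType X) : IsLindelof (range e)ᶜ := by
  refine isLindelof_of_forall_isOpen_exists_isLindelof fun U hU hRU => ?_
  have hUr : Uᶜ ⊆ range e := compl_subset_comm.mp hRU
  have hK : IsCompact (e ⁻¹' Uᶜ) :=
    (he.isInducing.isCompact_preimage_iff hUr).2 hU.isClosed_compl.isCompact
  obtain ⟨Q, hQ, hKQ, B, hB, hBQ⟩ := hX _ hK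
  refine ⟨⋃ n, closure (e '' (B n)ᶜ),
    (isSigmaCompact_iUnion_of_isCompact _ fun n => isClosed_closure.isCompact).isLindelof, ?_, ?_⟩
  · intro y hy
    have hyQ : y ∉ closure (e '' Q) := by
      rw [(hQ.image he.continuous).isClosed.closure_eq]
      exact fun h => hy (image_subset_range e Q h)
    obtain ⟨k, hk⟩ := exists_notMem_closure_image_of_outerBase he.continuous hBQ hyQ
    have hy' : y ∈ closure (e '' B k) ∪ closure (e '' (B k)ᶜ) := by
      rw [he.dense.closure_image_union_closure_image_compl]
      exact mem_univ y
    exact mem_iUnion.2 ⟨k, hy'.resolve_left hk⟩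
  · refine iUnion_subset fun n y hy => by_contra fun hyU => ?_
    obtain ⟨x, rfl⟩ := hUr hyU
    have hx : x ∈ closure (B n)ᶜ := by
      rw [he.isInducing.closure_eq_preimage_closure_image]
      exact hy
    rw [(hB n).1.isClosed_compl.closure_eq] at hx
    exact hx ((hB n).2 (hKQ hyU))

theorem exists_isGδ_superset_disjoint_of_isLindelof [RegularSpace Y] {S L : Set Y}
    (hS : IsLindelof S) (hL : IsClosed L) (hSL : Disjoint S L) :
    ∃ G, IsGδ G ∧ L ⊆ G ∧ Disjoint G S := by
  choose N hN hNc hNL using fun y (hy : y ∈ S) =>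
    exists_mem_nhds_isClosed_subset (hL.isOpen_compl.mem_nhds (hSL.notMem_of_mem_left hy))
  obtain ⟨t, ht, hSt⟩ := hS.elim_nhds_subcover' N hN
  refine ⟨⋂ y ∈ t, (N y y.2)ᶜ, .biInter ht fun y _ => (hNc y y.2).isOpen_compl.isGδ,
    subset_iInter₂ fun y _ => subset_compl_comm.mp (hNL y y.2), disjoint_left.2 ?_⟩
  intro z hzG hzS
  obtain ⟨y, hyt, hzy⟩ := mem_iUnion₂.1 (hSt hzS)
  exact mem_iInter₂.1 hzG y hyt hzy

theorem exists_isOpen_seq_closure_subset [NormalSpace Y] {L : Set Y} (hL : IsClosed L)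
    {W : ℕ → Set Y} (hW : ∀ n, IsOpen (W n)) (hLW : ∀ n, L ⊆ W n) :
    ∃ D : ℕ → Set Y, (∀ n, IsOpen (D n)) ∧ (∀ n, L ⊆ D n) ∧
      ∀ n, closure (D (n + 1)) ⊆ D n ∩ W n := by
  have shrink (V : {V : Set Y // IsOpen V ∧ L ⊆ V}) :
      ∃ V' : {V : Set Y // IsOpen V ∧ L ⊆ V}, closure V'.1 ⊆ V.1 := by
    obtain ⟨V', hV', hLV', hV'V⟩ := normal_exists_closure_subset hL V.2.1 V.2.2
    exact ⟨⟨V', hV', hLV'⟩, hV'V⟩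
  choose s hs using shrink
  let D : ℕ → {V : Set Y // IsOpen V ∧ L ⊆ V} := fun n => Nat.rec ⟨univ, isOpen_univ, subset_univ L⟩
    (fun n V => s ⟨V.1 ∩ W n, V.2.1.inter (hW n), subset_inter V.2.2 (hLW n)⟩) n
  exact ⟨fun n => (D n).1, fun n => (D n).2.1, fun n => (D n).2.2, fun n => hs _⟩

theorem hasCountableOuterBase_iInter_closure [CompactSpace Y] {D : ℕ → Set Y}
    (hD : ∀ n, IsOpen (D n)) (hDD : ∀ n, closure (D (n + 1)) ⊆ D n) :
    HasCountableOuterBase (⋂ n, closure (D n)) := by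
  have hsub (n : ℕ) : ⋂ k, closure (D k) ⊆ D n := (iInter_subset _ (n + 1)).trans (hDD n)
  refine ⟨D, fun n => ⟨hD n, hsub n⟩, fun A hA hQA => ?_⟩
  have hanti : Antitone fun n => closure (D n) :=
    antitone_nat_of_succ_le fun n => (hDD n).trans subset_closure
  obtain ⟨n, hn⟩ := exists_subset_nhds_of_isCompact' hanti.directed_ge
    (fun n => isClosed_closure.isCompact) (fun n => isClosed_closure)
    (fun x hx => hA.mem_nhds (hQA hx))
  exact ⟨n, subset_closure.trans hn⟩

theorem IsGδ.exists_isClosed_hasCountableOuterBase [CompactSpace Y] [NormalSpace Y]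
    {L G : Set Y} (hG : IsGδ G) (hL : IsClosed L) (hLG : L ⊆ G) :
    ∃ Q, IsClosed Q ∧ L ⊆ Q ∧ Q ⊆ G ∧ HasCountableOuterBase Q := by
  obtain ⟨W, hW, rfl⟩ := hG.eq_iInter_nat
  obtain ⟨D, hD, hLD, hDW⟩ :=
    exists_isOpen_seq_closure_subset hL hW fun n => hLG.trans (iInter_subset _ n)
  exact ⟨⋂ n, closure (D n), isClosed_iInter fun _ => isClosed_closure,
    subset_iInter fun n => (hLD n).trans subset_closure,
    subset_iInter fun n => (iInter_subset _ (n + 1)).trans ((hDW n).trans inter_subset_right),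
    hasCountableOuterBase_iInter_closure hD fun n => (hDW n).trans inter_subset_left⟩

theorem HasCountableOuterBase.preimage {f : X → Y} (hf : IsInducing f) {Q : Set Y}
    (hQ : HasCountableOuterBase Q) (hQf : Q ⊆ range f) : HasCountableOuterBase (f ⁻¹' Q) := by
  obtain ⟨B, hB, hBQ⟩ := hQ
  refine ⟨fun k => f ⁻¹' B k, fun k => ⟨(hB k).1.preimage hf.continuous,
    preimage_mono (hB k).2⟩, fun A hA hQA => ?_⟩
  obtain ⟨G, hG, rfl⟩ := hf.isOpen_iff.1 hA
  have hQG : Q ⊆ G := by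
    rintro _ hy
    obtain ⟨x, rfl⟩ := hQf hy
    exact hQA hy
  obtain ⟨k, hk⟩ := hBQ G hG hQG
  exact ⟨k, preimage_mono hk⟩

theorem countableType_of_isLindelof_compl_range [CompactSpace Y] [T2Space Y] {e : X → Y}
    (he : IsInducing e) (hR : IsLindelof (range e)ᶜ) : CountableType X := by
  intro K hK
  have hL : IsClosed (e '' K) := (hK.image he.continuous).isClosed
  obtain ⟨G, hG, hLG, hGR⟩ := exists_isGδ_superset_disjoint_of_isLindelof hR hL
    (disjoint_compl_left_iff_subset.2 (image_subset_range e K))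
  obtain ⟨Q, hQ, hLQ, hQG, hQB⟩ := hG.exists_isClosed_hasCountableOuterBase hL hLG
  have hQr : Q ⊆ range e := hQG.trans (disjoint_compl_right_iff_subset.1 hGR)
  exact ⟨e ⁻¹' Q, (he.isCompact_preimage_iff hQr).2 hQ.isCompact, image_subset_iff.1 hLQ,
    hQB.preimage he hQr⟩

theorem isLindelof_compl_range_iff_countableType [CompactSpace Y] [T2Space Y] {e : X → Y}
    (he : IsDenseInducing e) : IsLindelof (range e)ᶜ ↔ CountableType X :=
  ⟨countableType_of_isLindelof_compl_range he.isInducing,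
    isLindelof_compl_range_of_countableType he⟩

end CountableType

theorem stmt14 {X : Type*} [TopologicalSpace X] [T35Space X] :
    LindelofSpace ↥(StoneCechRemainder X) ↔ CountableType X := by
  rw [← isLindelof_iff_lindelofSpace]
  exact isLindelof_compl_range_iff_countableType isDenseInducing_stoneCechUnit
end

section
/- Let Y be the one-point Lindelöfication of an uncountable discrete space D. Then player 2 has a winning strategy in the Menger game G_fin(𝓞,𝓞) played on Y. -/
open Set

/-- The one-point Lindelofication of `D`: the extra point is `none`,
points of `D` are isolated, and neighborhoods of `none` are co-countable. -/
def Lind (D : Type*) := Option D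

instance (D : Type*) : TopologicalSpace (Lind D) where
  IsOpen s := (none : Option D) ∈ s → sᶜ.Countable
  isOpen_univ := fun _ => by simp
  isOpen_inter := fun s t hs ht h => by
    rw [Set.compl_inter]; exact (hs h.1).union (ht h.2)
  isOpen_sUnion := fun S hS h => by
    obtain ⟨s, hsS, hns⟩ := h
    exact ((hS s hsS) hns).mono (Set.compl_subset_compl.mpr (Set.subset_sUnion_of_mem hsS))

/-!
In round 0 player 2 picks a member `S` of the first cover containing the point at infinity.
Its complement is countable, say `{e₀, e₁, …}`, and in round `n` player 2 also picks a member
of the `n`-th cover containing `eₙ`.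
-/

section

variable {X : Type*}

noncomputable def memberContaining (𝓤 : Set (Set X)) (x : X) : Set X :=
  Classical.epsilon fun s => s ∈ 𝓤 ∧ x ∈ s

theorem memberContaining_spec {𝓤 : Set (Set X)} (h𝓤 : ⋃₀ 𝓤 = univ) (x : X) :
    memberContaining 𝓤 x ∈ 𝓤 ∧ x ∈ memberContaining 𝓤 x :=
  Classical.epsilon_spec (sUnion_eq_univ_iff.1 h𝓤 x)

variable [TopologicalSpace X]

/-- In round `n`, player 2 answers `σ n` to the covers `𝓤₀, …, 𝓤ₙ` played so far. -/
def IsWinningMengerStrategy (σ : (n : ℕ) → (Fin (n + 1) → Set (Set X)) → Set (Set X)) :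
    Prop :=
  ∀ U : ℕ → Set (Set X), (∀ n, (∀ s ∈ U n, IsOpen s) ∧ ⋃₀ U n = univ) →
    (∀ n, σ n (fun k => U k) ⊆ U n ∧ (σ n (fun k => U k)).Finite) ∧
      ⋃₀ (⋃ n, σ n (fun k => U k)) = univ

theorem exists_isWinningMengerStrategy_of_countable_compl (p : X)
    (hp : ∀ s : Set X, IsOpen s → p ∈ s → sᶜ.Countable) :
    ∃ σ, IsWinningMengerStrategy (X := X) σ := by
  have : Nonempty X := ⟨p⟩
  let enum (s : Set X) : ℕ → X := Classical.epsilon fun e => sᶜ ⊆ range e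
  refine ⟨fun n V => {memberContaining (V (Fin.last n)) p,
    memberContaining (V (Fin.last n)) (enum (memberContaining (V 0) p) n)}, fun U hU => ?_⟩
  set S := memberContaining (U 0) p
  have hS := memberContaining_spec (hU 0).2 p
  have hS_compl : Sᶜ ⊆ range (enum S) :=
    Classical.epsilon_spec <| countable_iff_exists_subset_range.1 <| hp S ((hU 0).1 S hS.1) hS.2
  refine ⟨fun n => ⟨?_, toFinite _⟩, sUnion_eq_univ_iff.2 fun x => ?_⟩
  · rintro s (rfl | rfl) <;> exact (memberContaining_spec (hU n).2 _).1
  · by_cases hx : x ∈ S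
    · exact ⟨S, mem_iUnion.2 ⟨0, Or.inl rfl⟩, hx⟩
    · obtain ⟨i, rfl⟩ := hS_compl hx
      exact ⟨_, mem_iUnion.2 ⟨i, Or.inr rfl⟩, (memberContaining_spec (hU i).2 _).2⟩

end

theorem stmt16_general (D : Type*) :
    ∃ σ : (n : ℕ) → (Fin (n + 1) → Set (Set (Lind D))) → Set (Set (Lind D)),
      ∀ U : ℕ → Set (Set (Lind D)),
        (∀ n, (∀ s ∈ U n, IsOpen s) ∧ ⋃₀ U n = Set.univ) →
        (∀ n, σ n (fun k => U k) ⊆ U n ∧ (σ n (fun k => U k)).Finite) ∧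
          ⋃₀ (⋃ n, σ n (fun k => U k)) = Set.univ :=
  exists_isWinningMengerStrategy_of_countable_compl (none : Lind D) fun _ hs => hs

theorem stmt16 (D : Type*) (hD : ¬ Countable D) :
    ∃ σ : (n : ℕ) → (Fin (n + 1) → Set (Set (Lind D))) → Set (Set (Lind D)),
      ∀ U : ℕ → Set (Set (Lind D)),
        (∀ n, (∀ s ∈ U n, IsOpen s) ∧ ⋃₀ U n = Set.univ) →
        (∀ n, σ n (fun k => U k) ⊆ U n ∧ (σ n (fun k => U k)).Finite) ∧
          ⋃₀ (⋃ n, σ n (fun k => U k)) = Set.univ :=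
  stmt16_general D
end

section
/- The one-point Lindelöfication of a discrete space of cardinality ℵ₁ is a Menger space that does not satisfy S_fin(𝓐,𝓐). -/
open Set

/-!
Every neighbourhood of the extra point is co-countable, so one member of the first cover leaves
out only countably many points, and the later covers can pick these up one at a time: the space
is Menger. On the other hand every countable set is closed and every set of isolated points is
discrete, so a compact set contains no countably infinite set of isolated points and is finite. The singletons
of the points of `D` form an almost covering, finitely many of them per step cover only countably
many points, and the uncountable remainder is not compact.
-/

namespace Lind

variable {D : Type*}

theorem isOpen_singleton_some (d : D) : IsOpen ({(some d : Lind D)} : Set (Lind D)) :=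
  fun h => absurd (mem_singleton_iff.1 h) (Option.some_ne_none d).symm

theorem isClosed_of_countable {s : Set (Lind D)} (hs : s.Countable) : IsClosed s :=
  isOpen_compl_iff.1 fun _ => by rwa [compl_compl]

theorem isDiscrete_of_none_notMem {s : Set (Lind D)} (hs : (none : Option D) ∉ s) :
    IsDiscrete s := by
  refine isDiscrete_iff_forall_mem_exists_isOpen.2 fun y hy => ?_
  obtain ⟨d, rfl⟩ := Option.ne_none_iff_exists'.1 (ne_of_mem_of_not_mem hy hs)
  exact ⟨{some d}, isOpen_singleton_some d, inter_eq_left.2 (singleton_subset_iff.2 hy)⟩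

theorem finite_of_isCompact {K : Set (Lind D)} (hK : IsCompact K) : K.Finite := by
  refine Finite.of_sdiff (t := {(none : Option D)}) ?_ (finite_singleton _)
  by_contra h
  obtain ⟨T, hTK, hTc, hTi⟩ := Infinite.exists_subset_countable_infinite h
  have hT : IsCompact T :=
    hK.of_isClosed_subset (isClosed_of_countable hTc) (hTK.trans sdiff_subset)
  exact hTi (hT.finite (isDiscrete_of_none_notMem fun hn => (hTK hn).2 rfl))

theorem menger : Menger (Lind D) := by
  intro U hU
  obtain ⟨s, hsU, hs⟩ : (none : Option D) ∈ ⋃₀ U 0 := (hU 0).2 ▸ mem_univ _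
  have : Nonempty (Lind D) := ⟨(none : Option D)⟩
  obtain ⟨f, hf⟩ := countable_iff_exists_subset_range.1 ((hU 0).1 s hsU hs)
  have hcover : ∀ n, f n ∈ ⋃₀ U (n + 1) := fun n => (hU (n + 1)).2 ▸ mem_univ _
  choose t htU hft using hcover
  refine ⟨fun | 0 => {s} | n + 1 => {t n}, ?_, ?_⟩
  · rintro (_ | n)
    · exact ⟨singleton_subset_iff.2 hsU, finite_singleton _⟩
    · exact ⟨singleton_subset_iff.2 (htU n), finite_singleton _⟩
  · refine eq_univ_of_forall fun x => ?_
    by_cases hx : x ∈ s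
    · exact ⟨s, mem_iUnion.2 ⟨0, rfl⟩, hx⟩
    · obtain ⟨n, rfl⟩ := hf hx
      exact ⟨t n, mem_iUnion.2 ⟨n + 1, rfl⟩, hft n⟩

theorem almostCover_range_singleton_some :
    AlmostCover (range fun d : D => ({(some d : Lind D)} : Set (Lind D))) := by
  refine ⟨forall_mem_range.2 isOpen_singleton_some, ?_⟩
  have h : (⋃₀ range fun d : D => ({some d} : Set (Option D)))ᶜ = {none} := by
    rw [sUnion_range, iUnion_singleton_eq_range, compl_range_some]
  exact h ▸ isCompact_singleton

theorem not_sfinAA [Uncountable D] : ¬ SfinAA (Lind D) := by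
  intro h
  obtain ⟨V, hV, hcompact⟩ := h _ fun _ => almostCover_range_singleton_some
  set W := ⋃₀ ⋃ n, V n
  have hW : W.Countable := by
    refine Countable.sUnion (countable_iUnion fun n => (hV n).2.countable) ?_
    intro s hs
    obtain ⟨n, hn⟩ := mem_iUnion.1 hs
    obtain ⟨d, rfl⟩ := (hV n).1 hn
    exact countable_singleton _
  have huniv : (univ : Set (Option D)).Countable :=
    union_compl_self W ▸ hW.union (finite_of_isCompact hcompact).countable
  have : Countable (Option D) := countable_univ_iff.1 huniv
  exact not_countable (Option.some_injective D).countable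

end Lind

theorem stmt17 (D : Type*) (hD : Cardinal.mk D = Cardinal.aleph 1) :
    Menger (Lind D) ∧ ¬ SfinAA (Lind D) := by
  have : Uncountable D := by
    rw [← Cardinal.aleph0_lt_mk_iff, hD]
    exact Cardinal.aleph0_lt_aleph_one
  exact ⟨Lind.menger, Lind.not_sfinAA⟩
end
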